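/- arXiv:2506.02725 — 3 statements merged into one kernel-verified Lean document; each statement's English description precedes it below -/
import Mathlib

section
/- Let d ≥ 1 and let a > 1 and s ≠ 0 be real numbers, and fix k₀ ∈ ℕ. On a probability space, let (b̄ₖ)ₖ and (eₖ)ₖ be sequences of Bochner-integrable random vectors in ℝ^d such that for every k ≥ k₀ + 2 the pathwise recursion b̄ₖ = a • (b̄ₖ₋₁ − s • eₖ₋₁) + s • eₖ holds, 𝔼[eₖ] = 0 for every k, and 𝔼[b̄ₖ₀₊₁] ≠ 0. Then ‖𝔼[b̄ₖ]‖ → ∞ as k → ∞. (Proposition 1: divergence of the eavesdropper's decoding error after a critical event.) -/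
/-!
Taking expectations kills the zero-mean quantization errors, so the mean decoding error obeys
`𝔼 b̄ₖ₊₁ = a • 𝔼 b̄ₖ` from `k₀ + 1` on and hence grows like `aᵏ ‖𝔼 b̄_{k₀+1}‖`.
-/

open MeasureTheory Filter

section Geometric

variable {𝕜 E : Type*} [NormedDivisionRing 𝕜] [NormedAddCommGroup E] [Module 𝕜 E]

theorem eq_pow_smul_of_forall_ge_succ_eq_smul {a : 𝕜} {m : ℕ → E} {N : ℕ}
    (hm : ∀ k, N ≤ k → m (k + 1) = a • m k) (n : ℕ) : m (n + N) = a ^ n • m N := by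
  induction n with
  | zero => simp
  | succ n ih =>
    rw [Nat.add_right_comm, hm _ (Nat.le_add_left N n), ih, smul_smul, pow_succ']

theorem tendsto_norm_atTop_of_forall_ge_succ_eq_smul [NormSMulClass 𝕜 E] {a : 𝕜}
    (ha : 1 < ‖a‖) {m : ℕ → E} {N : ℕ} (hm : ∀ k, N ≤ k → m (k + 1) = a • m k) (hN : m N ≠ 0) :
    Tendsto (fun k => ‖m k‖) atTop atTop := by
  rw [← tendsto_add_atTop_iff_nat N]
  simp only [eq_pow_smul_of_forall_ge_succ_eq_smul hm, norm_smul, norm_pow]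
  exact (tendsto_pow_atTop_atTop_of_one_lt ha).atTop_mul_const (norm_pos_iff.mpr hN)

end Geometric

theorem integral_smul_sub_smul_add_smul {Ω E : Type*} [MeasurableSpace Ω] {μ : Measure Ω}
    [NormedAddCommGroup E] [NormedSpace ℝ E] {X Y Z : Ω → E} (hX : Integrable X μ)
    (hY : Integrable Y μ) (hZ : Integrable Z μ) (c s : ℝ) :
    ∫ ω, c • (X ω - s • Y ω) + s • Z ω ∂μ =
      c • (∫ ω, X ω ∂μ - s • ∫ ω, Y ω ∂μ) + s • ∫ ω, Z ω ∂μ := by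
  have hsY : Integrable (fun ω => s • Y ω) μ := hY.smul s
  have hsZ : Integrable (fun ω => s • Z ω) μ := hZ.smul s
  rw [integral_add (f := fun ω => c • (X ω - s • Y ω)) ((hX.sub hsY).smul c) hsZ,
    integral_smul, integral_smul, integral_sub hX hsY, integral_smul]

theorem eavesdropper_decoding_error_diverges_general
    {d : ℕ}
    {Ω : Type*} [MeasurableSpace Ω] (μ : Measure Ω)
    (a s : ℝ) (ha : 1 < a) (k₀ : ℕ)
    (bbar e : ℕ → Ω → EuclideanSpace ℝ (Fin d))
    (hbbar_int : ∀ k, Integrable (bbar k) μ)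
    (he_int : ∀ k, Integrable (e k) μ)
    (hrec : ∀ k, k₀ + 1 ≤ k → ∀ ω,
      bbar (k + 1) ω = a • (bbar k ω - s • e k ω) + s • e (k + 1) ω)
    (he_mean : ∀ k, ∫ ω, e k ω ∂μ = 0)
    (hb_ne : ∫ ω, bbar (k₀ + 1) ω ∂μ ≠ 0) :
    Tendsto (fun k => ‖∫ ω, bbar k ω ∂μ‖) atTop atTop := by
  have ha' : 1 < ‖a‖ := by rwa [Real.norm_of_nonneg (by linarith)]
  refine tendsto_norm_atTop_of_forall_ge_succ_eq_smul ha' (fun k hk => ?_) hb_ne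
  rw [integral_congr_ae (ae_of_all μ (hrec k hk)),
    integral_smul_sub_smul_add_smul (hbbar_int k) (he_int k) (he_int (k + 1)), he_mean, he_mean,
    smul_zero, sub_zero, add_zero]

/-- Proposition 1: divergence of the eavesdropper's decoding error after a critical event. -/
theorem eavesdropper_decoding_error_diverges
    {d : ℕ} (hd : 1 ≤ d)
    {Ω : Type*} [MeasurableSpace Ω] (μ : Measure Ω) [IsProbabilityMeasure μ]
    (a s : ℝ) (ha : 1 < a) (hs : s ≠ 0) (k₀ : ℕ)
    (bbar e : ℕ → Ω → EuclideanSpace ℝ (Fin d))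
    (hbbar_int : ∀ k, Integrable (bbar k) μ)
    (he_int : ∀ k, Integrable (e k) μ)
    (hrec : ∀ k, k₀ + 1 ≤ k → ∀ ω,
      bbar (k + 1) ω = a • (bbar k ω - s • e k ω) + s • e (k + 1) ω)
    (he_mean : ∀ k, ∫ ω, e k ω ∂μ = 0)
    (hb_ne : ∫ ω, bbar (k₀ + 1) ω ∂μ ≠ 0) :
    Tendsto (fun k => ‖∫ ω, bbar k ω ∂μ‖) atTop atTop :=
  eavesdropper_decoding_error_diverges_general μ a s ha k₀ bbar e hbbar_int he_int hrec he_mean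
    hb_ne
end

section
/- Let P and Q be symmetric n×n real matrices and C an m×n real matrix, and let q > 0, c > 0, σ > 0 be reals. Assume Q ⪰ q·Iₙ, P ⪰ Q, C·Cᵀ ⪰ c·Iₘ, and that the symmetric m×m matrix S = C·P·Cᵀ + R (with R positive semidefinite) is positive definite and satisfies S ⪯ σ·Iₘ. Define the gain K = P·Cᵀ·S⁻¹. Then Kᵀ·K ⪰ (q²·c/σ²)·Iₘ; in particular there exists a positive scalar κ̄ = q²c/σ² with Kᵀ·K ⪰ κ̄·Iₘ. (Proposition 2: uniform lower bound on the estimator gain.) -/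
/-!
Fix `x` and put `w = S⁻¹ x`, so that `K x = P Cᵀ w`. Since `0 ⪯ S ⪯ σ I`, Cauchy–Schwarz for the
form of `S` gives `|x|² = |S w|² ≤ σ² |w|²`; `C Cᵀ ⪰ c I` gives `|Cᵀ w|² ≥ c |w|²`; and `P ⪰ q I`
gives `|P z|² ≥ q² |z|²` for every `z`. Chaining, `|K x|² ≥ q² c |w|² ≥ (q² c / σ²) |x|²`.
-/

open Matrix

namespace Matrix

variable {ι : Type*} [Fintype ι]

lemma dotProduct_self_nonneg (v : ι → ℝ) : 0 ≤ v ⬝ᵥ v :=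
  Finset.sum_nonneg fun i _ => mul_self_nonneg (v i)

lemma dotProduct_sq_le_dotProduct_self_mul (v w : ι → ℝ) :
    (v ⬝ᵥ w) ^ 2 ≤ (v ⬝ᵥ v) * (w ⬝ᵥ w) := by
  simpa only [dotProduct, pow_two] using Finset.sum_mul_sq_le_sq_mul_sq Finset.univ v w

lemma dotProduct_mulVec_transpose_mul_self {κ : Type*} [Fintype κ] (A : Matrix κ ι ℝ)
    (v : ι → ℝ) :
    v ⬝ᵥ (Aᵀ * A) *ᵥ v = (A *ᵥ v) ⬝ᵥ (A *ᵥ v) := by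
  rw [← mulVec_mulVec, dotProduct_mulVec, vecMul_transpose]

lemma PosSemidef.dotProduct_mulVec_self_nonneg {A : Matrix ι ι ℝ} (hA : A.PosSemidef)
    (v : ι → ℝ) : 0 ≤ v ⬝ᵥ A *ᵥ v := by
  simpa using hA.dotProduct_mulVec_nonneg v

variable [DecidableEq ι]

namespace PosSemidef

lemma dotProduct_mulVec_sq_le {A : Matrix ι ι ℝ} (hA : A.PosSemidef) (v w : ι → ℝ) :
    (v ⬝ᵥ A *ᵥ w) ^ 2 ≤ (v ⬝ᵥ A *ᵥ v) * (w ⬝ᵥ A *ᵥ w) := by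
  obtain ⟨T, rfl⟩ : ∃ T : Matrix ι ι ℝ, A = star T * T := by
    open MatrixOrder in exact CStarAlgebra.nonneg_iff_eq_star_mul_self.mp hA.nonneg
  have hform (x y : ι → ℝ) : x ⬝ᵥ (star T * T) *ᵥ y = (T *ᵥ x) ⬝ᵥ (T *ᵥ y) := by
    rw [star_eq_conjTranspose, conjTranspose_eq_transpose_of_trivial, ← mulVec_mulVec,
      dotProduct_mulVec, vecMul_transpose]
  simpa only [hform] using dotProduct_sq_le_dotProduct_self_mul (T *ᵥ v) (T *ᵥ w)

lemma mul_dotProduct_self_le {A : Matrix ι ι ℝ} {a : ℝ} (h : (A - a • 1).PosSemidef)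
    (v : ι → ℝ) : a * (v ⬝ᵥ v) ≤ v ⬝ᵥ A *ᵥ v := by
  simpa [sub_mulVec, dotProduct_sub, smul_mulVec] using h.dotProduct_mulVec_nonneg v

lemma dotProduct_mulVec_le {A : Matrix ι ι ℝ} {a : ℝ} (h : (a • 1 - A).PosSemidef)
    (v : ι → ℝ) : v ⬝ᵥ A *ᵥ v ≤ a * (v ⬝ᵥ v) := by
  simpa [sub_mulVec, dotProduct_sub, smul_mulVec] using h.dotProduct_mulVec_nonneg v

end PosSemidef

lemma sq_mul_dotProduct_self_le_of_posSemidef_sub_smul_one {A : Matrix ι ι ℝ} {a : ℝ}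
    (ha : 0 ≤ a) (h : (A - a • 1).PosSemidef) (v : ι → ℝ) :
    a ^ 2 * (v ⬝ᵥ v) ≤ (A *ᵥ v) ⬝ᵥ (A *ᵥ v) := by
  have hlow := h.mul_dotProduct_self_le v
  have hcs : (v ⬝ᵥ A *ᵥ v) ^ 2 ≤ (v ⬝ᵥ v) * ((A *ᵥ v) ⬝ᵥ (A *ᵥ v)) :=
    dotProduct_sq_le_dotProduct_self_mul _ _
  have hv := dotProduct_self_nonneg v
  rcases hv.eq_or_lt with hv0 | hvpos
  · rw [← hv0, mul_zero]; exact dotProduct_self_nonneg _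
  · have : (a * (v ⬝ᵥ v)) ^ 2 ≤ (v ⬝ᵥ A *ᵥ v) ^ 2 := pow_le_pow_left₀ (by positivity) hlow 2
    nlinarith

lemma dotProduct_self_mulVec_le {A : Matrix ι ι ℝ} {a : ℝ} (hA : A.PosSemidef)
    (h : (a • 1 - A).PosSemidef) (v : ι → ℝ) :
    (A *ᵥ v) ⬝ᵥ (A *ᵥ v) ≤ a ^ 2 * (v ⬝ᵥ v) := by
  set y := A *ᵥ v
  -- `|y|² = y ⬝ A v`, so Cauchy–Schwarz for the form of `A` bounds `|y|⁴`.
  have hcs : (y ⬝ᵥ y) ^ 2 ≤ (y ⬝ᵥ A *ᵥ y) * (v ⬝ᵥ A *ᵥ v) :=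
    hA.dotProduct_mulVec_sq_le y v
  have hprod : (y ⬝ᵥ A *ᵥ y) * (v ⬝ᵥ A *ᵥ v) ≤ (a * (y ⬝ᵥ y)) * (a * (v ⬝ᵥ v)) :=
    mul_le_mul (h.dotProduct_mulVec_le y) (h.dotProduct_mulVec_le v)
      (hA.dotProduct_mulVec_self_nonneg v)
      ((hA.dotProduct_mulVec_self_nonneg y).trans (h.dotProduct_mulVec_le y))
  rcases (dotProduct_self_nonneg y).eq_or_lt with hy0 | hypos
  · rw [← hy0]; nlinarith [dotProduct_self_nonneg v]
  · nlinarith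

lemma posSemidef_transpose_mul_self_sub_smul_one {κ : Type*} [Fintype κ] (K : Matrix κ ι ℝ)
    {a : ℝ} (h : ∀ v, a * (v ⬝ᵥ v) ≤ (K *ᵥ v) ⬝ᵥ (K *ᵥ v)) : (Kᵀ * K - a • 1).PosSemidef := by
  refine .of_dotProduct_mulVec_nonneg ?_ fun v => ?_
  · simp [IsHermitian, transpose_sub, transpose_mul]
  · simpa [sub_mulVec, dotProduct_sub, smul_mulVec, dotProduct_mulVec_transpose_mul_self] using h v

end Matrix

theorem gain_lower_bound_general
    {n m : ℕ} (P Q : Matrix (Fin n) (Fin n) ℝ) (C : Matrix (Fin m) (Fin n) ℝ)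
    (R : Matrix (Fin m) (Fin m) ℝ)
    (q c σ : ℝ) (hq : 0 < q) (hc : 0 < c) (hσ : 0 < σ)
    (hQq : (Q - q • (1 : Matrix (Fin n) (Fin n) ℝ)).PosSemidef)
    (hPQ : (P - Q).PosSemidef)
    (hCC : (C * Cᵀ - c • (1 : Matrix (Fin m) (Fin m) ℝ)).PosSemidef)
    (hSpd : (C * P * Cᵀ + R).PosDef)
    (hSσ : (σ • (1 : Matrix (Fin m) (Fin m) ℝ) - (C * P * Cᵀ + R)).PosSemidef) :
    ((P * Cᵀ * (C * P * Cᵀ + R)⁻¹)ᵀ * (P * Cᵀ * (C * P * Cᵀ + R)⁻¹) -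
        (q ^ 2 * c / σ ^ 2) • (1 : Matrix (Fin m) (Fin m) ℝ)).PosSemidef ∧
      ∃ κ : ℝ, 0 < κ ∧
        ((P * Cᵀ * (C * P * Cᵀ + R)⁻¹)ᵀ * (P * Cᵀ * (C * P * Cᵀ + R)⁻¹) -
          κ • (1 : Matrix (Fin m) (Fin m) ℝ)).PosSemidef := by
  set S := C * P * Cᵀ + R
  have hPq : (P - q • 1).PosSemidef := by simpa using hPQ.add hQq
  have hbound : ((P * Cᵀ * S⁻¹)ᵀ * (P * Cᵀ * S⁻¹) - (q ^ 2 * c / σ ^ 2) • 1).PosSemidef := by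
    refine posSemidef_transpose_mul_self_sub_smul_one _ fun x => ?_
    set w := S⁻¹ *ᵥ x
    have hx : S *ᵥ w = x := by
      rw [mulVec_mulVec, mul_nonsing_inv _ ((isUnit_iff_isUnit_det S).mp hSpd.isUnit), one_mulVec]
    have hKx : (P * Cᵀ * S⁻¹) *ᵥ x = P *ᵥ (Cᵀ *ᵥ w) := by
      simp only [w, mulVec_mulVec, Matrix.mul_assoc]
    calc q ^ 2 * c / σ ^ 2 * (x ⬝ᵥ x)
        ≤ q ^ 2 * c / σ ^ 2 * (σ ^ 2 * (w ⬝ᵥ w)) := by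
          rw [← hx]; gcongr; exact dotProduct_self_mulVec_le hSpd.posSemidef hSσ w
      _ = q ^ 2 * (c * (w ⬝ᵥ w)) := by field_simp
      _ ≤ q ^ 2 * ((Cᵀ *ᵥ w) ⬝ᵥ (Cᵀ *ᵥ w)) := by
          gcongr
          simpa only [← dotProduct_mulVec_transpose_mul_self, transpose_transpose]
            using hCC.mul_dotProduct_self_le w
      _ ≤ ((P * Cᵀ * S⁻¹) *ᵥ x) ⬝ᵥ ((P * Cᵀ * S⁻¹) *ᵥ x) := by
          rw [hKx]; exact sq_mul_dotProduct_self_le_of_posSemidef_sub_smul_one hq.le hPq _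
  exact ⟨hbound, _, by positivity, hbound⟩

/-- Proposition 2: uniform lower bound on the estimator gain. -/
theorem gain_lower_bound
    {n m : ℕ} (P Q : Matrix (Fin n) (Fin n) ℝ) (C : Matrix (Fin m) (Fin n) ℝ)
    (R : Matrix (Fin m) (Fin m) ℝ)
    (hP : P.IsSymm) (hQ : Q.IsSymm)
    (q c σ : ℝ) (hq : 0 < q) (hc : 0 < c) (hσ : 0 < σ)
    (hQq : (Q - q • (1 : Matrix (Fin n) (Fin n) ℝ)).PosSemidef)
    (hPQ : (P - Q).PosSemidef)
    (hCC : (C * Cᵀ - c • (1 : Matrix (Fin m) (Fin m) ℝ)).PosSemidef)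
    (hR : R.PosSemidef)
    (hSpd : (C * P * Cᵀ + R).PosDef)
    (hSσ : (σ • (1 : Matrix (Fin m) (Fin m) ℝ) - (C * P * Cᵀ + R)).PosSemidef) :
    ((P * Cᵀ * (C * P * Cᵀ + R)⁻¹)ᵀ * (P * Cᵀ * (C * P * Cᵀ + R)⁻¹) -
        (q ^ 2 * c / σ ^ 2) • (1 : Matrix (Fin m) (Fin m) ℝ)).PosSemidef ∧
      ∃ κ : ℝ, 0 < κ ∧
        ((P * Cᵀ * (C * P * Cᵀ + R)⁻¹)ᵀ * (P * Cᵀ * (C * P * Cᵀ + R)⁻¹) -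
          κ • (1 : Matrix (Fin m) (Fin m) ℝ)).PosSemidef :=
  gain_lower_bound_general P Q C R q c σ hq hc hσ hQq hPQ hCC hSpd hSσ
end

section
/- Let A be an n×n real matrix, κ̄ > 0 a real number, k₀ ∈ ℕ, and for every k ∈ ℕ let Kₖ be an n×m real matrix with Kₖᵀ·Kₖ ⪰ κ̄·Iₘ. Let (bₖ)ₖ in ℝⁿ and (cₖ)ₖ in ℝᵐ be sequences satisfying bₖ₊₁ = A·bₖ + Kₖ₊₁·cₖ₊₁ for all k ≥ k₀. If ‖cₖ‖ → ∞ as k → ∞, then the sequence (‖bₖ‖)ₖ is not eventually bounded; i.e., there is no constant χ̃ such that ‖bₖ‖ ≤ χ̃ for all sufficiently large k. (The deterministic core of Lemma 1: divergence of the eavesdropper's mean estimation error.) -/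
open Matrix Filter

/-!
The gain condition `Kᵀ K ⪰ κ I` gives `√κ ‖x‖ ≤ ‖K x‖`. If `‖b k‖ ≤ χ` eventually, then
`K (k+1) c (k+1) = b (k+1) - A b k` is eventually bounded by `χ + ‖A‖ χ`, hence so is
`√κ ‖c (k+1)‖`, contradicting `‖c k‖ → ∞`.
-/

variable {ι ι' : Type*} [Fintype ι] [Fintype ι'] [DecidableEq ι]

lemma Matrix.sq_norm_toEuclideanLin (K : Matrix ι' ι ℝ) (x : EuclideanSpace ℝ ι) :
    ‖K.toEuclideanLin x‖ ^ 2 = x.ofLp ⬝ᵥ (Kᵀ * K) *ᵥ x.ofLp := by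
  rw [← real_inner_self_eq_norm_sq, EuclideanSpace.inner_eq_star_dotProduct, ← mulVec_mulVec,
    dotProduct_mulVec, vecMul_transpose]
  rfl

lemma Matrix.mul_sq_norm_le_sq_norm_toEuclideanLin {K : Matrix ι' ι ℝ} {κ : ℝ}
    (hK : (Kᵀ * K - κ • (1 : Matrix ι ι ℝ)).PosSemidef) (x : EuclideanSpace ℝ ι) :
    κ * ‖x‖ ^ 2 ≤ ‖K.toEuclideanLin x‖ ^ 2 := by
  have h := hK.dotProduct_mulVec_nonneg x.ofLp
  have hx : x.ofLp ⬝ᵥ x.ofLp = ‖x‖ ^ 2 := by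
    rw [← real_inner_self_eq_norm_sq, EuclideanSpace.inner_eq_star_dotProduct, star_trivial]
  rwa [star_trivial, sub_mulVec, smul_mulVec, one_mulVec, dotProduct_sub, dotProduct_smul,
    smul_eq_mul, ← sq_norm_toEuclideanLin, hx, sub_nonneg] at h

lemma Matrix.sqrt_mul_norm_le_norm_toEuclideanLin {K : Matrix ι' ι ℝ} {κ : ℝ}
    (hK : (Kᵀ * K - κ • (1 : Matrix ι ι ℝ)).PosSemidef) (x : EuclideanSpace ℝ ι) :
    √κ * ‖x‖ ≤ ‖K.toEuclideanLin x‖ := by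
  simpa [Real.sqrt_mul', Real.sqrt_sq] using
    Real.sqrt_le_sqrt (mul_sq_norm_le_sq_norm_toEuclideanLin hK x)

lemma eventually_norm_succ_sub_apply_le {𝕜 E : Type*} [NontriviallyNormedField 𝕜]
    [SeminormedAddCommGroup E] [NormedSpace 𝕜 E] (f : E →L[𝕜] E) {b : ℕ → E} {χ : ℝ}
    (hb : ∀ᶠ k in atTop, ‖b k‖ ≤ χ) : ∀ᶠ k in atTop, ‖b (k + 1) - f (b k)‖ ≤ χ + ‖f‖ * χ := by
  filter_upwards [hb, tendsto_add_atTop_nat 1 |>.eventually hb] with k hk hk'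
  calc ‖b (k + 1) - f (b k)‖ ≤ ‖b (k + 1)‖ + ‖f (b k)‖ := norm_sub_le _ _
    _ ≤ χ + ‖f‖ * χ := by gcongr; exact f.le_opNorm_of_le hk

/-- The deterministic core of Lemma 1: divergence of the eavesdropper's mean
estimation error. -/
theorem mean_estimation_error_not_eventually_bounded
    {n m : ℕ} (A : Matrix (Fin n) (Fin n) ℝ) (κ : ℝ) (hκ : 0 < κ) (k₀ : ℕ)
    (K : ℕ → Matrix (Fin n) (Fin m) ℝ)
    (hK : ∀ k, ((K k)ᵀ * K k - κ • (1 : Matrix (Fin m) (Fin m) ℝ)).PosSemidef)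
    (b : ℕ → EuclideanSpace ℝ (Fin n)) (c : ℕ → EuclideanSpace ℝ (Fin m))
    (hrec : ∀ k, k₀ ≤ k →
      b (k + 1) = A.toEuclideanLin (b k) + (K (k + 1)).toEuclideanLin (c (k + 1)))
    (hc : Tendsto (fun k => ‖c k‖) atTop atTop) :
    ¬ ∃ χ : ℝ, ∀ᶠ k in atTop, ‖b k‖ ≤ χ := by
  rintro ⟨χ, hχ⟩
  set f := LinearMap.toContinuousLinearMap A.toEuclideanLin
  have hKc_bdd : ∀ᶠ k in atTop, ‖(K (k + 1)).toEuclideanLin (c (k + 1))‖ ≤ χ + ‖f‖ * χ := by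
    filter_upwards [eventually_norm_succ_sub_apply_le f hχ, eventually_ge_atTop k₀] with k hk hk₀
    rwa [hrec k hk₀, LinearMap.coe_toContinuousLinearMap', add_sub_cancel_left] at hk
  have hc_div : Tendsto (fun k => √κ * ‖c (k + 1)‖) atTop atTop :=
    (hc.comp (tendsto_add_atTop_nat 1)).const_mul_atTop (Real.sqrt_pos.2 hκ)
  obtain ⟨k, hk_large, hk_bdd⟩ := ((hc_div.eventually_gt_atTop (χ + ‖f‖ * χ)).and hKc_bdd).exists
  linarith [(K (k + 1)).sqrt_mul_norm_le_norm_toEuclideanLin (hK (k + 1)) (c (k + 1))]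
end
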